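/- arXiv:math/0205303 — 7 statements merged into one kernel-verified Lean document; each statement's English description precedes it below -/
import Mathlib

section
/- Let A(z) = (-1)^n · n! · (R_n(z+1) − R_n(1) · R_{n−1}(z)), where R_m(x) = ∑_{k=0}^m (−x)^k/k!. Then A(z) + A'(z) = (z+1)^n + R_n(1) · n · z^{n−1} as polynomials in z, for every n ≥ 1. -/
open Polynomial

/-- `R m` is the degree-`m` partial sum of `e^{-x}`: `∑_{k=0}^m (-x)^k / k!`. -/
noncomputable def Rpoly (m : ℕ) : Polynomial ℝ :=
  ∑ k ∈ Finset.range (m + 1), Polynomial.C ((-1 : ℝ) ^ k / k.factorial) * Polynomial.X ^ k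

/-- `A(z) = (-1)^n n! (R_n(z+1) - R_n(1) R_{n-1}(z))`. -/
noncomputable def Apoly (n : ℕ) : Polynomial ℝ :=
  Polynomial.C ((-1 : ℝ) ^ n * n.factorial) *
    ((Rpoly n).comp (Polynomial.X + Polynomial.C 1) -
      Polynomial.C ((Rpoly n).eval 1) * Rpoly (n - 1))

lemma Rpoly_succ (m : ℕ) :
    Rpoly (m + 1) = Rpoly m + Polynomial.C ((-1 : ℝ) ^ (m+1) / (m+1).factorial) *
      Polynomial.X ^ (m+1) := by
  simp [Rpoly, Finset.sum_range_succ]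

lemma Rpoly_key (m : ℕ) :
    Rpoly m + (Rpoly m).derivative =
      Polynomial.C ((-1 : ℝ) ^ m / m.factorial) * Polynomial.X ^ m := by
  induction m with
  | zero => simp [Rpoly]
  | succ m ih =>
    rw [Rpoly_succ]
    have h0 : (m.factorial : ℝ) ≠ 0 := Nat.cast_ne_zero.mpr m.factorial_ne_zero
    have hfac : ((m+1).factorial : ℝ) = ((m:ℝ)+1) * m.factorial := by
      push_cast [Nat.factorial_succ]; ring
    have hscal : ((-1 : ℝ) ^ (m+1) / (m+1).factorial) * (((m+1:ℕ):ℝ))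
        = -((-1 : ℝ) ^ m / m.factorial) := by
      rw [hfac]
      have h2 : ((m:ℝ)+1) ≠ 0 := by positivity
      push_cast
      field_simp
      ring
    have hc1 : Polynomial.C ((-1:ℝ)^(m+1) / (m+1).factorial) *
        (Polynomial.C (((m+1:ℕ):ℝ)) * Polynomial.X ^ (m+1-1))
        = -(Polynomial.C ((-1:ℝ)^m / m.factorial) * Polynomial.X ^ m) := by
      rw [show m+1-1 = m from rfl, ← mul_assoc, ← Polynomial.C_mul, hscal]
      simp [neg_mul]
    rw [derivative_add, derivative_mul, derivative_C, derivative_X_pow]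
    linear_combination ih + hc1

theorem stmt_3 (n : ℕ) (hn : 1 ≤ n) :
    Apoly n + (Apoly n).derivative =
      (Polynomial.X + Polynomial.C 1) ^ n +
        Polynomial.C ((Rpoly n).eval 1 * n) * Polynomial.X ^ (n - 1) := by
  obtain ⟨m, rfl⟩ := Nat.exists_eq_add_of_le hn
  rw [Nat.add_comm 1 m]
  set c : ℝ := (Rpoly (m + 1)).eval 1 with hc
  have hcomp : ((Rpoly (m+1)).comp (Polynomial.X + Polynomial.C 1)).derivative
      = (Rpoly (m+1)).derivative.comp (Polynomial.X + Polynomial.C 1) := by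
    rw [Polynomial.derivative_comp]; simp
  have key := Rpoly_key (m+1)
  have keym := Rpoly_key m
  have h0 : (m.factorial : ℝ) ≠ 0 := Nat.cast_ne_zero.mpr m.factorial_ne_zero
  have h0' : ((m+1).factorial : ℝ) ≠ 0 := Nat.cast_ne_zero.mpr (m+1).factorial_ne_zero
  have hfac : ((m+1).factorial : ℝ) = ((m:ℝ)+1) * m.factorial := by
    push_cast [Nat.factorial_succ]; ring
  have expand : Apoly (m+1) + (Apoly (m+1)).derivative
      = Polynomial.C ((-1 : ℝ) ^ (m+1) * (m+1).factorial) *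
        ((Rpoly (m+1) + (Rpoly (m+1)).derivative).comp (Polynomial.X + Polynomial.C 1)
          - Polynomial.C c * (Rpoly m + (Rpoly m).derivative)) := by
    rw [Apoly]
    rw [show (m+1) - 1 = m from rfl]
    rw [derivative_mul, derivative_C, derivative_sub, hcomp, derivative_mul, derivative_C]
    rw [Polynomial.add_comp, ← hc]
    ring
  rw [expand, key, keym]
  rw [Polynomial.mul_comp, Polynomial.C_comp, Polynomial.X_pow_comp]
  have hs1 : ((-1:ℝ)^(m+1)) * ((-1:ℝ)^(m+1)) = 1 := by
    rw [← pow_add, Even.neg_one_pow ⟨m+1, by ring⟩]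
  have hs2 : ((-1:ℝ)^(m+1)) * ((-1:ℝ)^m) = -1 := by
    rw [← pow_add, Odd.neg_one_pow ⟨m, by ring⟩]
  have e1 : ((-1 : ℝ) ^ (m+1) * (m+1).factorial) * ((-1 : ℝ) ^ (m+1) / (m+1).factorial) = 1 := by
    field_simp
    linear_combination hs1
  have e2 : ((-1 : ℝ) ^ (m+1) * (m+1).factorial) * ((-1 : ℝ) ^ m / m.factorial)
      = -((m:ℝ)+1) := by
    rw [hfac]
    field_simp
    linear_combination hs2
  rw [show (m+1) - 1 = m from rfl]
  have goal : Polynomial.C ((-1 : ℝ) ^ (m+1) * (m+1).factorial) *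
      (Polynomial.C ((-1:ℝ)^(m+1) / (m+1).factorial) * (Polynomial.X + Polynomial.C 1) ^ (m+1)
        - Polynomial.C c * (Polynomial.C ((-1:ℝ)^m / m.factorial) * Polynomial.X ^ m))
      = (Polynomial.X + Polynomial.C 1) ^ (m+1)
        + Polynomial.C (c * ((m:ℝ)+1)) * Polynomial.X ^ m := by
    rw [mul_sub, ← mul_assoc, ← Polynomial.C_mul, e1]
    rw [show Polynomial.C ((-1:ℝ)^(m+1) * (m+1).factorial) *
        (Polynomial.C c * (Polynomial.C ((-1:ℝ)^m / m.factorial) * Polynomial.X ^ m))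
        = Polynomial.C (((-1:ℝ)^(m+1) * (m+1).factorial) * ((-1:ℝ)^m / m.factorial) * c)
          * Polynomial.X ^ m by simp only [Polynomial.C_mul]; ring]
    rw [e2]
    rw [show (-((m:ℝ)+1)) * c = -(c * ((m:ℝ)+1)) by ring]
    simp [sub_neg_eq_add]
  rw [goal]
  push_cast
  ring
end

section
/- Let B(z) = (-1)^n · n! · (R_n(z+1) − R_{n−1}(1) · R_n(z)) where R_m(x) = ∑_{k=0}^m (−x)^k/k!. Then all coefficients B_w (0 ≤ w ≤ n) of the polynomial B are nonnegative, for every n ≥ 1. -/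
open Polynomial

/-- `B(z) = (-1)^n n! (R_n(z+1) - R_{n-1}(1) R_n(z))`. -/
noncomputable def Bpoly (n : ℕ) : Polynomial ℝ :=
  Polynomial.C ((-1 : ℝ) ^ n * n.factorial) *
    ((Rpoly n).comp (Polynomial.X + Polynomial.C 1) -
      Polynomial.C ((Rpoly (n - 1)).eval 1) * Rpoly n)

noncomputable def eSum (m : ℕ) : ℝ :=
  ∑ j ∈ Finset.range (m + 1), (-1 : ℝ) ^ j / j.factorial

lemma eSum_succ (m : ℕ) : eSum (m + 1) = eSum m + (-1 : ℝ) ^ (m+1) / (m+1).factorial := by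
  rw [eSum, Finset.sum_range_succ, eSum]

lemma eval_R (m : ℕ) : (Rpoly m).eval 1 = eSum m := by
  simp [Rpoly, eSum, eval_finset_sum]

lemma coeff_R (n w : ℕ) (hw : w ≤ n) :
    (Rpoly n).coeff w = (-1 : ℝ) ^ w / w.factorial := by
  simp only [Rpoly, finset_sum_coeff, coeff_C_mul, coeff_X_pow, mul_ite, mul_one, mul_zero]
  rw [Finset.sum_ite_eq (Finset.range (n+1)) w]
  simp [Nat.lt_succ_of_le hw]

lemma choose_div (w j : ℕ) :
    ((w+j).choose w : ℝ) / (w+j).factorial = 1 / (w.factorial * j.factorial) := by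
  have h := Nat.add_choose_mul_factorial_mul_factorial j w
  rw [Nat.add_comm j w] at h
  have hc : ((w+j).choose w : ℝ) * j.factorial * w.factorial = (w+j).factorial := by
    exact_mod_cast h
  rw [div_eq_div_iff (by positivity) (by positivity)]
  linear_combination hc

lemma coeff_comp (n w : ℕ) (hw : w ≤ n) :
    ((Rpoly n).comp (Polynomial.X + Polynomial.C 1)).coeff w
      = (-1 : ℝ) ^ w / w.factorial * eSum (n - w) := by
  have hcomp : (Rpoly n).comp (Polynomial.X + Polynomial.C 1)
      = ∑ k ∈ Finset.range (n + 1),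
          Polynomial.C ((-1 : ℝ) ^ k / k.factorial) * (Polynomial.X + 1) ^ k := by
    rw [Rpoly, Polynomial.comp, Polynomial.eval₂_finset_sum]
    refine Finset.sum_congr rfl fun k _ => ?_
    simp [Polynomial.C_1]
  rw [hcomp]
  simp only [finset_sum_coeff, coeff_C_mul, coeff_X_add_one_pow]
  -- sum over k of (-1)^k/k! * choose k w
  rw [Finset.range_eq_Ico, ← Finset.sum_Ico_consecutive _ (Nat.zero_le w)
    (by omega : w ≤ n + 1)]
  have h0 : ∑ k ∈ Finset.Ico 0 w, (-1 : ℝ) ^ k / k.factorial * (k.choose w : ℝ) = 0 := by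
    refine Finset.sum_eq_zero fun k hk => ?_
    have : k < w := (Finset.mem_Ico.mp hk).2
    simp [Nat.choose_eq_zero_of_lt this]
  rw [h0, zero_add, Finset.sum_Ico_eq_sum_range]
  have hnw : n + 1 - w = (n - w) + 1 := by omega
  rw [hnw, eSum, Finset.mul_sum]
  refine Finset.sum_congr rfl fun j _ => ?_
  have key := choose_div w j
  have hw0 : (w.factorial : ℝ) ≠ 0 := by positivity
  have hj0 : (j.factorial : ℝ) ≠ 0 := by positivity
  have hwj0 : ((w+j).factorial : ℝ) ≠ 0 := by positivity
  rw [pow_add]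
  field_simp at key ⊢
  linear_combination key

lemma key_sign : ∀ k : ℕ, ∀ a : ℕ, 0 ≤ (-1 : ℝ) ^ (a+1) * (eSum (a+k) - eSum a) := by
  intro k
  induction k using Nat.strong_induction_on with
  | _ k ih =>
    match k with
    | 0 => intro a; simp
    | 1 =>
      intro a
      rw [eSum_succ]
      have : (-1:ℝ)^(a+1) * (eSum a + (-1)^(a+1)/(a+1).factorial - eSum a)
          = ((-1:ℝ)^(a+1))^2 / (a+1).factorial := by ring
      rw [this]
      positivity
    | (k+2) =>
      intro a
      have h1 := ih k (by omega) (a+2)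
      have hsplit : eSum (a+(k+2)) - eSum a
          = (eSum ((a+2)+k) - eSum (a+2)) + (eSum (a+2) - eSum a) := by
        have : a + (k+2) = (a+2)+k := by omega
        rw [this]; ring
      have hpair : eSum (a+2) - eSum a
          = (-1:ℝ)^(a+1) * (1/(a+1).factorial - 1/(a+2).factorial) := by
        have h2 : a + 2 = (a+1) + 1 := by omega
        rw [h2, eSum_succ, eSum_succ]
        have : (-1:ℝ)^(a+1+1) = -(-1:ℝ)^(a+1) := by rw [pow_succ]; ring
        rw [this]
        ring
      have hfac : (1:ℝ)/(a+1).factorial - 1/(a+2).factorial ≥ 0 := by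
        have hle : ((a+1).factorial : ℝ) ≤ ((a+2).factorial : ℝ) := by
          exact_mod_cast Nat.factorial_le (by omega)
        have h1p : (0:ℝ) < (a+1).factorial := by positivity
        have h2p : (0:ℝ) < (a+2).factorial := by positivity
        rw [ge_iff_le, sub_nonneg, div_le_div_iff₀ h2p h1p]
        nlinarith
      rw [hsplit, mul_add, hpair]
      have heq : (-1:ℝ)^(a+1) * ((-1:ℝ)^(a+1) * (1/(a+1).factorial - 1/(a+2).factorial))
          = ((-1:ℝ)^(a+1))^2 * (1/(a+1).factorial - 1/(a+2).factorial) := by ring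
      have hsq : ((-1:ℝ)^(a+1))^2 = 1 := by
        rw [← pow_mul, mul_comm, pow_mul]; norm_num
      have h3 : (-1:ℝ)^(a+3) = (-1:ℝ)^(a+1) := by
        rw [show a+3 = (a+1)+2 by omega, pow_add]; norm_num
      rw [h3] at h1
      have : 0 ≤ (-1:ℝ)^(a+1) * (eSum (a+2+k) - eSum (a+2)) := h1
      nlinarith [hfac, hsq]

theorem stmt_5 (n : ℕ) (hn : 1 ≤ n) :
    ∀ w ≤ n, 0 ≤ (Bpoly n).coeff w := by
  intro w hw
  have hcoeff : (Bpoly n).coeff w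
      = (-1:ℝ)^n * n.factorial *
          ((-1:ℝ)^w / w.factorial * eSum (n - w)
            - eSum (n-1) * ((-1:ℝ)^w / w.factorial)) := by
    rw [Bpoly, coeff_C_mul, coeff_sub, coeff_C_mul, coeff_comp n w hw, coeff_R n w hw,
      eval_R]
  rcases Nat.eq_zero_or_pos w with hw0 | hw1
  · subst hw0
    have hn1 : n = (n-1) + 1 := by omega
    rw [hcoeff]
    simp only [Nat.sub_zero, pow_zero, Nat.factorial_zero, Nat.cast_one, div_one, one_mul,
      mul_one]
    have hE : eSum n = eSum (n-1) + (-1:ℝ)^n / n.factorial := by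
      conv_lhs => rw [hn1]
      rw [eSum_succ, ← hn1]
    rw [hE]
    have hsq : ((-1:ℝ)^n)^2 = 1 := by
      rw [← pow_mul, mul_comm, pow_mul]; norm_num
    have hf : (0:ℝ) < n.factorial := by positivity
    have heq : (-1:ℝ)^n * n.factorial *
        (eSum (n-1) + (-1)^n / n.factorial - eSum (n-1))
        = ((-1:ℝ)^n)^2 * (n.factorial / n.factorial) := by
      field_simp
      ring
    rw [heq, hsq, one_mul]
    positivity
  · -- w ≥ 1
    obtain ⟨m, hm⟩ : ∃ m, n = m + w := ⟨n - w, by omega⟩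
    obtain ⟨k, hk⟩ : ∃ k, w = k + 1 := ⟨w - 1, by omega⟩
    have hks := key_sign k m
    have hmk : n - 1 = m + k := by omega
    have hmw : n - w = m := by omega
    rw [hcoeff, hmk, hmw]
    have hpow : (-1:ℝ)^n = (-1:ℝ)^m * (-1:ℝ)^w := by
      rw [hm, pow_add]
    have hpoww : ((-1:ℝ)^w)^2 = 1 := by
      rw [← pow_mul, mul_comm, pow_mul]; norm_num
    have hfn : (0:ℝ) ≤ n.factorial := by positivity
    have hfw : (0:ℝ) < w.factorial := by positivity
    have heq : (-1:ℝ)^n * n.factorial *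
        ((-1:ℝ)^w / w.factorial * eSum m - eSum (m+k) * ((-1:ℝ)^w / w.factorial))
        = (n.factorial / w.factorial) * (((-1:ℝ)^w)^2 *
            ((-1:ℝ)^(m+1) * (eSum (m+k) - eSum m))) := by
      rw [hpow, pow_succ]
      ring
    rw [heq, hpoww, one_mul]
    have hdiv : (0:ℝ) ≤ n.factorial / w.factorial := by positivity
    exact mul_nonneg hdiv hks
end

section
/- Fix n ≥ 1. Let A_0, …, A_n and B_0, …, B_n be nonnegative reals, and let A(z) = ∑_{w=0}^n A_w z^w and B(z) = ∑_{w=0}^n B_w z^w. If A(z) + A'(z) ≥ (z+1)^n coefficientwise and B(z) + B'(z) ≤ (z+1)^n coefficientwise, then B(1) ≤ A(1). -/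
open Polynomial Finset

noncomputable def fseq (w m : ℕ) : ℝ :=
  ∑ j ∈ Finset.Ico (w + 1) m, (-1 : ℝ) ^ (j + w + 1) * (Nat.factorial w : ℝ) / (Nat.factorial j : ℝ)

lemma fseq_self (w : ℕ) : fseq w (w + 1) = 0 := by
  simp [fseq]

lemma fseq_rec (w m : ℕ) (h : w + 2 ≤ m) :
    ((w : ℝ) + 1) * fseq w m = 1 - fseq (w + 1) m := by
  have h1 : (w + 1) < m := by omega
  rw [fseq, Finset.sum_eq_sum_Ico_succ_bot h1, mul_add, Finset.mul_sum]
  have hfac : (Nat.factorial (w+1) : ℝ) ≠ 0 := by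
    exact_mod_cast Nat.factorial_ne_zero (w+1)
  have hfirst : ((w:ℝ)+1) * ((-1:ℝ)^(w+1+w+1) * (Nat.factorial w : ℝ)/(Nat.factorial (w+1) : ℝ)) = 1 := by
    rw [show w+1+w+1 = 2*(w+1) by ring, pow_mul]
    rw [Nat.factorial_succ]
    push_cast
    field_simp
    simp
  have hterm : ∀ j, ((w:ℝ)+1) * ((-1:ℝ)^(j+w+1) * (Nat.factorial w : ℝ)/(Nat.factorial j : ℝ))
      = -((-1:ℝ)^(j+(w+1)+1) * (Nat.factorial (w+1) : ℝ)/(Nat.factorial j : ℝ)) := by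
    intro j
    rw [show j+(w+1)+1 = (j+w+1)+1 by ring, pow_succ, Nat.factorial_succ]
    push_cast
    ring
  rw [hfirst]
  have : ∑ j ∈ Finset.Ico (w+1+1) m, ((w:ℝ)+1) * ((-1:ℝ)^(j+w+1) * (Nat.factorial w : ℝ)/(Nat.factorial j : ℝ))
      = -fseq (w+1) m := by
    rw [fseq, ← Finset.sum_neg_distrib]
    exact Finset.sum_congr rfl fun j _ => hterm j
  rw [this]
  ring

lemma fseq_bounds : ∀ (k w m : ℕ), m = w + 1 + k → 0 ≤ fseq w m ∧ fseq w m ≤ 1 := by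
  intro k
  induction k with
  | zero =>
    intro w m hm
    subst hm
    simp [fseq_self]
  | succ k ih =>
    intro w m hm
    have h2 : w + 2 ≤ m := by omega
    have hrec := fseq_rec w m h2
    have hb := ih (w+1) m (by omega)
    have hw : (0:ℝ) < (w:ℝ) + 1 := by positivity
    constructor
    · nlinarith [hb.1, hb.2]
    · nlinarith [hb.1, hb.2]

lemma fseq_nonneg (w m : ℕ) (h : w + 1 ≤ m) : 0 ≤ fseq w m :=
  (fseq_bounds (m - (w+1)) w m (by omega)).1

lemma fseq_le_one (w m : ℕ) (h : w + 1 ≤ m) : fseq w m ≤ 1 :=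
  (fseq_bounds (m - (w+1)) w m (by omega)).2

noncomputable def xsq (n w : ℕ) : ℝ := if w = 0 then 1 else fseq w (n+1)

noncomputable def ysq (n w : ℕ) : ℝ := if w = n then 1 else fseq w n

lemma xsq_nonneg (n w : ℕ) (h : w ≤ n) : 0 ≤ xsq n w := by
  unfold xsq
  split
  · norm_num
  · exact fseq_nonneg w (n+1) (by omega)

lemma ysq_nonneg (n w : ℕ) (h : w ≤ n) : 0 ≤ ysq n w := by
  unfold ysq
  split
  · norm_num
  · exact fseq_nonneg w n (by omega)

lemma xsq_ge (n w : ℕ) (hn : 1 ≤ n) (h : w ≤ n) :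
    1 ≤ xsq n w + (w : ℝ) * xsq n (w - 1) := by
  match w with
  | 0 => simp [xsq]
  | 1 =>
    have h0 : xsq n 0 = 1 := by simp [xsq]
    have h1 : xsq n 1 = fseq 1 (n+1) := by simp [xsq]
    have := fseq_nonneg 1 (n+1) (by omega)
    rw [show (1:ℕ) - 1 = 0 from rfl, h0, h1]
    push_cast
    linarith
  | (k+2) =>
    have h1 : xsq n (k+2) = fseq (k+2) (n+1) := by simp [xsq]
    have h2 : xsq n (k+2-1) = fseq (k+1) (n+1) := by simp [xsq]
    have hrec := fseq_rec (k+1) (n+1) (by omega)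
    rw [h1, h2]
    push_cast
    push_cast at hrec
    linarith

lemma ysq_le (n w : ℕ) (hn : 1 ≤ n) (h : w ≤ n) :
    ysq n w + (w : ℝ) * ysq n (w - 1) ≤ 1 := by
  by_cases hw : w = n
  · rw [hw]
    have h1 : ysq n n = 1 := by simp [ysq]
    have h2 : ysq n (n-1) = 0 := by
      have hne : n - 1 ≠ n := by omega
      have : fseq (n-1) n = 0 := by
        rw [show n = (n-1)+1 by omega]
        exact fseq_self (n-1)
      simp [ysq, hne, this]
    rw [h1, h2]
    norm_num
  · match w, hw, h with
    | 0, hw, h =>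
      have h1 : ysq n 0 = fseq 0 n := by simp [ysq, hw]
      have := fseq_le_one 0 n (by omega)
      rw [h1]
      push_cast
      linarith
    | (k+1), hw, h =>
      have hlt : k + 1 < n := by omega
      have h1 : ysq n (k+1) = fseq (k+1) n := by simp [ysq, hw]
      have h2 : ysq n (k+1-1) = fseq k n := by
        have : k ≠ n := by omega
        simp [ysq, this]
      have hrec := fseq_rec k n (by omega)
      rw [h1, h2]
      push_cast
      push_cast at hrec
      linarith

lemma abel_sum (n : ℕ) (p t : ℕ → ℝ) (hp : p (n+1) = 0) :
    ∑ w ∈ Finset.range (n+1), t w * (p w + ((w:ℝ)+1) * p (w+1))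
      = ∑ w ∈ Finset.range (n+1), (t w + (w:ℝ) * t (w-1)) * p w := by
  have h1 : ∑ w ∈ Finset.range (n+1), ((w:ℝ) * t (w-1)) * p w
      = ∑ w ∈ Finset.range (n+1), (((w:ℝ)+1) * t w) * p (w+1) := by
    rw [Finset.sum_range_succ' (fun w => ((w:ℝ) * t (w-1)) * p w) n]
    rw [Finset.sum_range_succ (fun w => (((w:ℝ)+1) * t w) * p (w+1)) n]
    rw [hp]
    simp only [Nat.cast_zero, zero_mul, mul_zero, add_zero]
    apply Finset.sum_congr rfl
    intro i _
    simp only [Nat.add_sub_cancel]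
    push_cast
    ring
  have expand1 : ∑ w ∈ Finset.range (n+1), t w * (p w + ((w:ℝ)+1) * p (w+1))
      = ∑ w ∈ Finset.range (n+1), t w * p w
        + ∑ w ∈ Finset.range (n+1), (((w:ℝ)+1) * t w) * p (w+1) := by
    rw [← Finset.sum_add_distrib]
    apply Finset.sum_congr rfl
    intro i _
    ring
  have expand2 : ∑ w ∈ Finset.range (n+1), (t w + (w:ℝ) * t (w-1)) * p w
      = ∑ w ∈ Finset.range (n+1), t w * p w
        + ∑ w ∈ Finset.range (n+1), ((w:ℝ) * t (w-1)) * p w := by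
    rw [← Finset.sum_add_distrib]
    apply Finset.sum_congr rfl
    intro i _
    ring
  rw [expand1, expand2, h1]

lemma key_id (n : ℕ) (hn : 1 ≤ n) :
    ∑ w ∈ Finset.range (n+1), xsq n w * (n.choose w : ℝ)
      = ∑ w ∈ Finset.range (n+1), ysq n w * (n.choose w : ℝ) := by
  rw [← sub_eq_zero, ← Finset.sum_sub_distrib]
  rw [Finset.sum_range_succ]
  have hxn : xsq n n = 0 := by
    have : n ≠ 0 := by omega
    simp only [xsq, if_neg this]
    rw [show n + 1 = n + 1 from rfl]
    exact fseq_self n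
  have hyn : ysq n n = 1 := by simp [ysq]
  rw [hxn, hyn, Nat.choose_self]
  rw [Finset.range_eq_Ico, Finset.sum_eq_sum_Ico_succ_bot (show 0 < n by omega)]
  have hx0 : xsq n 0 = 1 := by simp [xsq]
  have hy0 : ysq n 0 = fseq 0 n := by
    have : (0:ℕ) ≠ n := by omega
    simp [ysq, this]
  rw [hx0, hy0, Nat.choose_zero_right]
  have hmid : ∑ w ∈ Finset.Ico 1 n, (xsq n w * (n.choose w : ℝ) - ysq n w * (n.choose w : ℝ))
      = ∑ w ∈ Finset.Ico 1 n, (-1:ℝ)^(n+w+1) / (Nat.factorial (n-w) : ℝ) := by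
    apply Finset.sum_congr rfl
    intro w hw
    rw [Finset.mem_Ico] at hw
    obtain ⟨hw1, hw2⟩ := hw
    have hxw : xsq n w = fseq w (n+1) := by
      have : w ≠ 0 := by omega
      simp [xsq, this]
    have hyw : ysq n w = fseq w n := by
      have : w ≠ n := by omega
      simp [ysq, this]
    have hsplit : fseq w (n+1) = fseq w n
        + (-1:ℝ)^(n+w+1) * (Nat.factorial w : ℝ) / (Nat.factorial n : ℝ) := by
      rw [fseq, fseq, Finset.sum_Ico_succ_top (show w+1 ≤ n by omega)]
    have hc : ((n.choose w : ℕ) : ℝ) * (Nat.factorial w : ℝ) * (Nat.factorial (n-w) : ℝ)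
        = (Nat.factorial n : ℝ) := by
      exact_mod_cast Nat.choose_mul_factorial_mul_factorial (le_of_lt hw2)
    have hfn : (Nat.factorial n : ℝ) ≠ 0 := by exact_mod_cast Nat.factorial_ne_zero n
    have hfnw : (Nat.factorial (n-w) : ℝ) ≠ 0 := by exact_mod_cast Nat.factorial_ne_zero (n-w)
    rw [hxw, hyw, hsplit]
    field_simp
    linear_combination ((-1:ℝ)^(n+w+1)) * hc
  rw [hmid]
  have hsum : ∑ w ∈ Finset.Ico 1 n, (-1:ℝ)^(n+w+1) / (Nat.factorial (n-w) : ℝ) = fseq 0 n := by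
    rw [fseq]
    apply Finset.sum_nbij' (i := fun w => n - w) (j := fun w => n - w)
    · intro a ha
      rw [Finset.mem_Ico] at *
      omega
    · intro a ha
      rw [Finset.mem_Ico] at *
      omega
    · intro a ha
      rw [Finset.mem_Ico] at ha
      omega
    · intro a ha
      rw [Finset.mem_Ico] at ha
      omega
    · intro a ha
      rw [Finset.mem_Ico] at ha
      rw [show n + a + 1 = (n - a) + 0 + 1 + 2*a by omega, pow_add, pow_mul]
      simp [Nat.factorial_zero]
  rw [hsum]
  push_cast
  ring

theorem stmt_6 (n : ℕ) (hn : 1 ≤ n) (A B : Polynomial ℝ)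
    (hAdeg : A.natDegree ≤ n) (hBdeg : B.natDegree ≤ n)
    (hApos : ∀ w, 0 ≤ A.coeff w) (hBpos : ∀ w, 0 ≤ B.coeff w)
    (hA : ∀ w, ((Polynomial.X + Polynomial.C (1 : ℝ)) ^ n).coeff w ≤ (A + A.derivative).coeff w)
    (hB : ∀ w, (B + B.derivative).coeff w ≤ ((Polynomial.X + Polynomial.C (1 : ℝ)) ^ n).coeff w) :
    B.eval 1 ≤ A.eval 1 := by
  have hcoefB : ∀ w : ℕ, B.coeff w + ((w:ℝ)+1) * B.coeff (w+1) ≤ (n.choose w : ℝ) := by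
    intro w
    have h := hB w
    rw [Polynomial.coeff_add, Polynomial.coeff_derivative, Polynomial.C_1,
      Polynomial.coeff_X_add_one_pow] at h
    linarith
  have hcoefA : ∀ w : ℕ, (n.choose w : ℝ) ≤ A.coeff w + ((w:ℝ)+1) * A.coeff (w+1) := by
    intro w
    have h := hA w
    rw [Polynomial.coeff_add, Polynomial.coeff_derivative, Polynomial.C_1,
      Polynomial.coeff_X_add_one_pow] at h
    linarith
  have hBeval : B.eval 1 = ∑ w ∈ Finset.range (n+1), B.coeff w := by
    rw [Polynomial.eval_eq_sum_range' (Nat.lt_succ_of_le hBdeg)]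
    simp
  have hAeval : A.eval 1 = ∑ w ∈ Finset.range (n+1), A.coeff w := by
    rw [Polynomial.eval_eq_sum_range' (Nat.lt_succ_of_le hAdeg)]
    simp
  have hBtop : B.coeff (n+1) = 0 := Polynomial.coeff_eq_zero_of_natDegree_lt (by omega)
  have hAtop : A.coeff (n+1) = 0 := Polynomial.coeff_eq_zero_of_natDegree_lt (by omega)
  calc B.eval 1 = ∑ w ∈ Finset.range (n+1), B.coeff w := hBeval
    _ ≤ ∑ w ∈ Finset.range (n+1), (xsq n w + (w:ℝ) * xsq n (w-1)) * B.coeff w := by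
        apply Finset.sum_le_sum
        intro w hw
        rw [Finset.mem_range] at hw
        have h1 := xsq_ge n w hn (by omega)
        have := mul_le_mul_of_nonneg_right h1 (hBpos w)
        linarith
    _ = ∑ w ∈ Finset.range (n+1), xsq n w * (B.coeff w + ((w:ℝ)+1) * B.coeff (w+1)) :=
        (abel_sum n (fun w => B.coeff w) (xsq n) hBtop).symm
    _ ≤ ∑ w ∈ Finset.range (n+1), xsq n w * (n.choose w : ℝ) := by
        apply Finset.sum_le_sum
        intro w hw
        rw [Finset.mem_range] at hw
        exact mul_le_mul_of_nonneg_left (hcoefB w) (xsq_nonneg n w (by omega))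
    _ = ∑ w ∈ Finset.range (n+1), ysq n w * (n.choose w : ℝ) := key_id n hn
    _ ≤ ∑ w ∈ Finset.range (n+1), ysq n w * (A.coeff w + ((w:ℝ)+1) * A.coeff (w+1)) := by
        apply Finset.sum_le_sum
        intro w hw
        rw [Finset.mem_range] at hw
        exact mul_le_mul_of_nonneg_left (hcoefA w) (ysq_nonneg n w (by omega))
    _ = ∑ w ∈ Finset.range (n+1), (ysq n w + (w:ℝ) * ysq n (w-1)) * A.coeff w :=
        abel_sum n (fun w => A.coeff w) (ysq n) hAtop
    _ ≤ ∑ w ∈ Finset.range (n+1), A.coeff w := by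
        apply Finset.sum_le_sum
        intro w hw
        rw [Finset.mem_range] at hw
        have h1 := ysq_le n w hn (by omega)
        have := mul_le_mul_of_nonneg_right h1 (hApos w)
        linarith
    _ = A.eval 1 := hAeval.symm
end

section
/- For n ≥ 1, the optimal value E(n) of the linear program: minimize ∑_{u ∈ 𝔽₂ⁿ} x_u over x : 𝔽₂ⁿ → [0,1], subject to x_v + ∑_{u ⊃ v, dist(u,v)=1} x_u ≥ 1 for all v ∈ 𝔽₂ⁿ, equals (−1)^n · n! · (R_n(2) − R_n(1)·R_{n−1}(1)), where R_m(x) = ∑_{k=0}^m (−x)^k/k!. -/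
open Polynomial

/-- Feasibility for the continuous LP relaxation of asymmetric 1-coverings:
subsets of `Fin n` play the role of binary vectors, and the constraint at `v`
sums `x u` over the `u ⊇ v` at Hamming distance 1 from `v`. -/
def LPFeasible (n : ℕ) (x : Finset (Fin n) → ℝ) : Prop :=
  (∀ u : Finset (Fin n), 0 ≤ x u ∧ x u ≤ 1) ∧
  ∀ v : Finset (Fin n),
    1 ≤ x v + ∑ u ∈ Finset.univ.filter (fun u => v ⊆ u ∧ u.card = v.card + 1), x u


noncomputable def ff (k : ℕ) : ℝ := (-1) ^ k / k.factorial
noncomputable def rr (m : ℕ) : ℝ := ∑ k ∈ Finset.range (m + 1), ff k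
noncomputable def ee (m : ℕ) : ℝ := ∑ k ∈ Finset.range (m + 1), (-2 : ℝ) ^ k / k.factorial

lemma rr_succ (m : ℕ) : rr (m + 1) = rr m + ff (m + 1) := Finset.sum_range_succ _ _

lemma rr_zero : rr 0 = 1 := by simp [rr, ff]

lemma factR_pos (m : ℕ) : (0 : ℝ) < m.factorial := by positivity

lemma neg_one_sq_pow (k : ℕ) : ((-1 : ℝ)) ^ k * (-1) ^ k = 1 := by
  rw [← pow_add]
  exact Even.neg_one_pow ⟨k, rfl⟩

lemma altSum (N : ℕ) : ∀ g : ℕ → ℝ, (∀ j, 0 ≤ g j) → (∀ j, g (j + 1) ≤ g j) →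
    0 ≤ ∑ j ∈ Finset.range N, (-1 : ℝ) ^ j * g j ∧
      ∑ j ∈ Finset.range N, (-1 : ℝ) ^ j * g j ≤ g 0 := by
  induction N with
  | zero => intro g hg _; simpa using hg 0
  | succ N ih =>
    intro g hg hm
    obtain ⟨h1, h2⟩ := ih (fun j => g (j + 1)) (fun j => hg _) (fun j => hm _)
    have hs : ∑ j ∈ Finset.range (N + 1), (-1 : ℝ) ^ j * g j
        = g 0 - ∑ j ∈ Finset.range N, (-1 : ℝ) ^ j * g (j + 1) := by
      rw [Finset.sum_range_succ']
      rw [show ∑ k ∈ Finset.range N, (-1:ℝ)^(k+1) * g (k+1)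
          = -∑ j ∈ Finset.range N, (-1:ℝ)^j * g (j+1) by
        rw [← Finset.sum_neg_distrib]; apply Finset.sum_congr rfl; intro j _; ring]
      simp only [pow_zero, one_mul]
      ring
    constructor
    · rw [hs]; linarith [hm 0]
    · rw [hs]; linarith

lemma rr_sub (k d : ℕ) :
    (-1 : ℝ) ^ k * (rr k - rr (k + d))
      = ∑ j ∈ Finset.range d, (-1 : ℝ) ^ j * (1 / ((k + 1 + j).factorial : ℝ)) := by
  induction d with
  | zero => simp
  | succ d ih =>
    have h1 : rr (k + (d + 1)) = rr (k + d) + ff (k + d + 1) := by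
      rw [show k + (d + 1) = (k + d) + 1 from rfl, rr_succ]
    rw [h1, Finset.sum_range_succ, ← ih, ff,
      show k + 1 + d = k + d + 1 from by omega]
    rw [pow_succ, pow_add]
    linear_combination ((-1:ℝ)^d / ((k+d+1).factorial : ℝ)) * neg_one_sq_pow k

lemma rr_sub_nonneg (k d : ℕ) : 0 ≤ (-1 : ℝ) ^ k * (rr k - rr (k + d)) := by
  rw [rr_sub]
  refine (altSum d (fun j => 1 / ((k + 1 + j).factorial : ℝ)) (fun j => by positivity)
    (fun j => ?_)).1
  apply one_div_le_one_div_of_le (factR_pos _)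
  exact_mod_cast Nat.factorial_le (by omega)

lemma rr_sub_le (k d : ℕ) :
    (-1 : ℝ) ^ k * (rr k - rr (k + d)) ≤ 1 / ((k + 1).factorial : ℝ) := by
  rw [rr_sub]
  have := (altSum d (fun j => 1 / ((k + 1 + j).factorial : ℝ)) (fun j => by positivity)
    (fun j => by
      apply one_div_le_one_div_of_le (factR_pos _)
      exact_mod_cast Nat.factorial_le (by omega))).2
  simpa using this

lemma rr_nonneg (m : ℕ) : 0 ≤ rr m := by
  have h : rr m = ∑ j ∈ Finset.range (m + 1), (-1 : ℝ) ^ j * (1 / (j.factorial : ℝ)) := by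
    apply Finset.sum_congr rfl; intro j _; rw [ff]; ring
  rw [h]
  refine (altSum (m+1) _ (fun j => by positivity) (fun j => ?_)).1
  apply one_div_le_one_div_of_le (factR_pos _)
  exact_mod_cast Nat.factorial_le (by omega)

lemma key_rec (j : ℕ) (c : ℝ) :
    (-1 : ℝ) ^ (j + 1) * ((j + 1).factorial : ℝ) * (rr (j + 1) - c)
      + ((j : ℝ) + 1) * ((-1) ^ j * (j.factorial : ℝ) * (rr j - c)) = 1 := by
  rw [rr_succ, ff, Nat.factorial_succ]
  have h3 : ((j + 1).factorial : ℝ) ≠ 0 := ne_of_gt (factR_pos _)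
  rw [Nat.factorial_succ] at h3
  push_cast
  rw [pow_succ]
  field_simp
  linear_combination neg_one_sq_pow j

lemma conv (m : ℕ) : ∑ k ∈ Finset.range (m + 1), ff k * ff (m - k)
    = (-2 : ℝ) ^ m / m.factorial := by
  have key : ∀ k ∈ Finset.range (m + 1),
      ff k * ff (m - k) = (-1 : ℝ) ^ m * ((m.choose k : ℝ) / m.factorial) := by
    intro k hk
    have hkm : k ≤ m := by
      have := Finset.mem_range.mp hk; omega
    obtain ⟨j, rfl⟩ : ∃ j, m = k + j := ⟨m - k, by omega⟩
    rw [show k + j - k = j from by omega, ff, ff,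
      Nat.cast_choose ℝ (show k ≤ k + j by omega),
      show k + j - k = j from by omega, pow_add]
    have h1 : (k.factorial : ℝ) ≠ 0 := ne_of_gt (factR_pos _)
    have h2 : (j.factorial : ℝ) ≠ 0 := ne_of_gt (factR_pos _)
    have h3 : ((k + j).factorial : ℝ) ≠ 0 := ne_of_gt (factR_pos _)
    field_simp
  rw [Finset.sum_congr rfl key, ← Finset.mul_sum, ← Finset.sum_div]
  rw [← Nat.cast_sum, Nat.sum_range_choose]
  rw [show (-2:ℝ)^m = (-1)^m * 2^m from by rw [neg_pow]]
  push_cast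
  ring

lemma claimC (n : ℕ) : ∑ k ∈ Finset.range (n + 1), ff k * rr (n - k) = ee n := by
  induction n with
  | zero => simp [rr, ee, ff]
  | succ n ih =>
    rw [Finset.sum_range_succ]
    have h1 : ∀ k ∈ Finset.range (n + 1),
        ff k * rr (n + 1 - k) = ff k * rr (n - k) + ff k * ff (n - k + 1) := by
      intro k hk
      have hkn : k ≤ n := by have := Finset.mem_range.mp hk; omega
      rw [show n + 1 - k = (n - k) + 1 from by omega, rr_succ]
      ring
    rw [Finset.sum_congr rfl h1, Finset.sum_add_distrib, ih]
    have h4 := conv (n + 1)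
    rw [Finset.sum_range_succ, show n + 1 - (n + 1) = 0 from by omega] at h4
    have h5 : ∀ k ∈ Finset.range (n + 1), ff k * ff (n + 1 - k) = ff k * ff (n - k + 1) := by
      intro k hk
      have hkn : k ≤ n := by have := Finset.mem_range.mp hk; omega
      rw [show n + 1 - k = n - k + 1 from by omega]
    rw [Finset.sum_congr rfl h5] at h4
    have h6 : ee (n + 1) = ee n + (-2 : ℝ) ^ (n + 1) / (n + 1).factorial :=
      Finset.sum_range_succ _ _
    have h7 : rr 0 = ff 0 := by simp [rr]
    have h8 : ff (n + 1) * rr 0 = ff (n + 1) * ff 0 := by rw [h7]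
    rw [show n + 1 - (n + 1) = 0 from by omega, h8, h6]
    linarith [h4]

lemma genSum (n : ℕ) (c : ℝ) :
    ∑ k ∈ Finset.range (n + 1), (n.choose k : ℝ) * ((-1) ^ k * (k.factorial : ℝ) * (rr k - c))
      = (-1) ^ n * (n.factorial : ℝ) * (ee n - c * rr n) := by
  rw [← Finset.sum_range_reflect]
  have key : ∀ k ∈ Finset.range (n + 1),
      (n.choose (n + 1 - 1 - k) : ℝ) * ((-1) ^ (n + 1 - 1 - k) * ((n + 1 - 1 - k).factorial : ℝ)
        * (rr (n + 1 - 1 - k) - c))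
      = (-1) ^ n * (n.factorial : ℝ) * (ff k * rr (n - k) - c * ff k) := by
    intro k hk
    have hkn : k ≤ n := by have := Finset.mem_range.mp hk; omega
    rw [show n + 1 - 1 - k = n - k from by omega, ff]
    obtain ⟨j, rfl⟩ : ∃ j, n = j + k := ⟨n - k, by omega⟩
    rw [show j + k - k = j from by omega,
      Nat.cast_choose ℝ (show j ≤ j + k by omega), show j + k - j = k from by omega,
      pow_add]
    have h1 : (k.factorial : ℝ) ≠ 0 := ne_of_gt (factR_pos _)
    have h2 : (j.factorial : ℝ) ≠ 0 := ne_of_gt (factR_pos _)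
    have h3 : ((j + k).factorial : ℝ) ≠ 0 := ne_of_gt (factR_pos _)
    have hsq : ((-1:ℝ)) ^ (k * 2) = 1 := by rw [mul_comm, pow_mul]; norm_num
    field_simp
    linear_combination (c - rr j) * hsq
  rw [Finset.sum_congr rfl key, ← Finset.mul_sum, Finset.sum_sub_distrib, claimC,
    ← Finset.mul_sum]
  rfl

noncomputable def bb (n k : ℕ) : ℝ := (-1) ^ k * (k.factorial : ℝ) * (rr k - rr (n - 1))

noncomputable def aa (n k : ℕ) : ℝ :=
  if k = n then 1 else ((n - k).factorial : ℝ) * ((-1) ^ (n - k) * (rr (n - k) - rr n))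

lemma bb_nonneg {n k : ℕ} (hn : 1 ≤ n) (hk : k ≤ n) : 0 ≤ bb n k := by
  rcases eq_or_ne k n with h | h
  · subst h
    have hr : rr k = rr (k - 1) + ff k := by
      rw [show k = (k - 1) + 1 from by omega, rr_succ]
      rw [show k - 1 + 1 = k from by omega]
    rw [bb, hr, ff]
    have h3 : (k.factorial : ℝ) ≠ 0 := ne_of_gt (factR_pos _)
    field_simp
    ring_nf
    rw [show k * 2 = 2 * k from by omega, pow_mul]
    norm_num
  · obtain ⟨d, hd⟩ : ∃ d, n - 1 = k + d := ⟨n - 1 - k, by omega⟩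
    have hb : bb n k = (k.factorial : ℝ) * ((-1) ^ k * (rr k - rr (k + d))) := by
      rw [bb, hd]; ring
    rw [hb]
    exact mul_nonneg (by positivity) (rr_sub_nonneg k d)

lemma bb_zero_le_one (n : ℕ) : bb n 0 ≤ 1 := by
  have h := rr_nonneg (n - 1)
  rw [bb]
  simp [rr_zero]
  linarith

lemma bb_rec (n j : ℕ) : bb n (j + 1) + ((j : ℝ) + 1) * bb n j = 1 := by
  rw [bb, bb]
  exact key_rec j (rr (n - 1))

lemma aa_nonneg {n k : ℕ} (hk : k ≤ n) : 0 ≤ aa n k := by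
  rcases eq_or_ne k n with h | h
  · rw [aa, if_pos h]; norm_num
  · rw [aa, if_neg h]
    obtain ⟨m, rfl⟩ : ∃ m, n = m + k := ⟨n - k, by omega⟩
    rw [show m + k - k = m from by omega]
    refine mul_nonneg (by positivity) ?_
    have := rr_sub_nonneg m k
    rw [show m + k = m + k from rfl] at this
    linarith [rr_sub_nonneg m k]

lemma aa_le_one {n k : ℕ} (hk : k ≤ n) : aa n k ≤ 1 := by
  rcases eq_or_ne k n with h | h
  · rw [aa, if_pos h]
  · rw [aa, if_neg h]
    obtain ⟨m, rfl⟩ : ∃ m, n = m + k := ⟨n - k, by omega⟩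
    rw [show m + k - k = m from by omega]
    calc (m.factorial : ℝ) * ((-1) ^ m * (rr m - rr (m + k)))
        ≤ (m.factorial : ℝ) * (1 / ((m + 1).factorial : ℝ)) := by
          exact mul_le_mul_of_nonneg_left (rr_sub_le m k) (by positivity)
      _ ≤ 1 := by
          rw [mul_one_div, div_le_one (factR_pos _)]
          exact_mod_cast Nat.factorial_le (by omega)

lemma aa_rec {n k : ℕ} (hk : k + 2 ≤ n) :
    aa n k + ((n : ℝ) - (k : ℝ)) * aa n (k + 1) = 1 := by
  obtain ⟨j, hj⟩ : ∃ j, n - k = j + 2 := ⟨n - k - 2, by omega⟩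
  rw [aa, if_neg (by omega), aa, if_neg (by omega), hj,
    show n - (k + 1) = j + 1 from by omega,
    show (n : ℝ) - (k : ℝ) = ((j : ℝ) + 1) + 1 from by
      have : n = k + (j + 2) := by omega
      rw [this]; push_cast; ring]
  have := key_rec (j + 1) (rr n)
  rw [show j + 1 + 1 = j + 2 from rfl] at this
  push_cast at this ⊢
  linear_combination this

lemma Dsum (n : ℕ) :
    ∑ k ∈ Finset.range (n + 1), (n.choose k : ℝ) * bb n k
      = (-1) ^ n * (n.factorial : ℝ) * (ee n - rr n * rr (n - 1)) := by
  have := genSum n (rr (n - 1))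
  simp only [bb]
  rw [this]
  ring

lemma Psum (n : ℕ) (hn : 1 ≤ n) :
    ∑ k ∈ Finset.range (n + 1), (n.choose k : ℝ) * aa n k
      = (-1) ^ n * (n.factorial : ℝ) * (ee n - rr n * rr (n - 1)) := by
  have hfull : ∑ k ∈ Finset.range (n + 1),
      (n.choose k : ℝ) * (((n - k).factorial : ℝ) * ((-1) ^ (n - k) * (rr (n - k) - rr n)))
      = (-1) ^ n * (n.factorial : ℝ) * (ee n - rr n * rr n) := by
    rw [← genSum n (rr n), ← Finset.sum_range_reflect]
    apply Finset.sum_congr rfl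
    intro k hk
    have hkn : k ≤ n := by have := Finset.mem_range.mp hk; omega
    rw [show n + 1 - 1 - k = n - k from by omega, Nat.choose_symm hkn,
      show n - (n - k) = k from by omega]
    ring
  rw [Finset.sum_range_succ] at hfull ⊢
  rw [show n - n = 0 from by omega] at hfull
  simp only [Nat.choose_self, Nat.cast_one, Nat.factorial_zero, pow_zero, rr_zero] at hfull
  have hrest : ∀ k ∈ Finset.range n, (n.choose k : ℝ) * aa n k
      = (n.choose k : ℝ) * (((n - k).factorial : ℝ) * ((-1) ^ (n - k) * (rr (n - k) - rr n))) := by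
    intro k hk
    have : k ≠ n := by have := Finset.mem_range.mp hk; omega
    rw [aa, if_neg this]
  rw [Finset.sum_congr rfl hrest, aa, if_pos rfl]
  have hr : rr n = rr (n - 1) + ff n := by
    rw [show n = (n - 1) + 1 from by omega, rr_succ, show n - 1 + 1 = n from by omega]
  have hfn : ((n.factorial : ℝ)) * ff n = (-1) ^ n := by
    rw [ff]; field_simp
  have hsq : ((-1 : ℝ)) ^ n * (-1) ^ n = 1 := neg_one_sq_pow n
  have goal2 : (-1 : ℝ) ^ n * (n.factorial : ℝ) * (rr n * rr n - rr n * rr (n - 1)) = rr n := by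
    have : rr n * rr n - rr n * rr (n - 1) = rr n * ff n := by rw [hr]; ring
    rw [this, show (-1:ℝ)^n * (n.factorial : ℝ) * (rr n * ff n)
        = (-1:ℝ)^n * rr n * ((n.factorial : ℝ) * ff n) from by ring, hfn]
    linear_combination rr n * hsq
  simp only [Nat.choose_self, Nat.cast_one]
  linear_combination hfull - goal2

lemma sum_card (n : ℕ) (h : ℕ → ℝ) :
    ∑ u : Finset (Fin n), h u.card = ∑ k ∈ Finset.range (n + 1), (n.choose k : ℝ) * h k := by
  rw [← Finset.sum_fiberwise_of_maps_to (g := fun u : Finset (Fin n) => u.card)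
    (t := Finset.range (n + 1)) (fun u _ => Finset.mem_range.mpr (Nat.lt_succ_of_le (by
      simpa using Finset.card_le_univ u)))]
  apply Finset.sum_congr rfl
  intro k _
  rw [Finset.sum_congr rfl (fun u hu => by
    rw [(Finset.mem_filter.mp hu).2]), Finset.sum_const, nsmul_eq_mul]
  congr 1
  have : Finset.univ.filter (fun u : Finset (Fin n) => u.card = k)
      = Finset.powersetCard k (Finset.univ : Finset (Fin n)) := by
    rw [Finset.powersetCard_eq_filter, Finset.powerset_univ]
  rw [this, Finset.card_powersetCard]
  simp

lemma card_sup (n : ℕ) (v : Finset (Fin n)) :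
    (Finset.univ.filter (fun u => v ⊆ u ∧ u.card = v.card + 1)).card = n - v.card := by
  have h := Finset.card_bij (s := vᶜ)
    (t := Finset.univ.filter (fun u => v ⊆ u ∧ u.card = v.card + 1))
    (fun i _ => insert i v) ?_ ?_ ?_
  · rw [← h, Finset.card_compl, Fintype.card_fin]
  · intro i hi
    have hiv : i ∉ v := by simpa using hi
    simp only [Finset.mem_filter, Finset.mem_univ, true_and]
    exact ⟨Finset.subset_insert _ _, Finset.card_insert_of_notMem hiv⟩
  · intro i hi j hj hij
    have hiv : i ∉ v := by simpa using hi
    have hij' : insert i v = insert j v := hij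
    have : i ∈ insert j v := hij' ▸ Finset.mem_insert_self i v
    rcases Finset.mem_insert.mp this with h' | h'
    · exact h'
    · exact absurd h' hiv
  · intro u hu
    obtain ⟨hsub, hcard⟩ := (Finset.mem_filter.mp hu).2
    have : (u \ v).card = 1 := by
      rw [Finset.card_sdiff_of_subset hsub]; omega
    obtain ⟨i, hi⟩ := Finset.card_eq_one.mp this
    have hiu : i ∈ u \ v := hi ▸ Finset.mem_singleton_self i
    refine ⟨i, by simpa using (Finset.mem_sdiff.mp hiu).2, ?_⟩
    show insert i v = u
    have : insert i v = (u \ v) ∪ v := by rw [hi, Finset.insert_eq]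
    rw [this, Finset.sdiff_union_of_subset hsub]

lemma card_sub (n : ℕ) (u : Finset (Fin n)) :
    (Finset.univ.filter (fun v => v ⊆ u ∧ u.card = v.card + 1)).card = u.card := by
  have h := Finset.card_bij (s := u)
    (t := Finset.univ.filter (fun v => v ⊆ u ∧ u.card = v.card + 1))
    (fun i _ => u.erase i) ?_ ?_ ?_
  · rw [← h]
  · intro i hi
    simp only [Finset.mem_filter, Finset.mem_univ, true_and]
    refine ⟨Finset.erase_subset _ _, ?_⟩
    rw [Finset.card_erase_of_mem hi]
    have : 1 ≤ u.card := Finset.card_pos.mpr ⟨i, hi⟩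
    omega
  · intro i hi j hj hij
    have hij' : u.erase i = u.erase j := hij
    by_contra hne
    have : i ∈ u.erase j := Finset.mem_erase.mpr ⟨hne, hi⟩
    rw [← hij'] at this
    exact (Finset.mem_erase.mp this).1 rfl
  · intro v hv
    obtain ⟨hsub, hcard⟩ := (Finset.mem_filter.mp hv).2
    have : (u \ v).card = 1 := by
      rw [Finset.card_sdiff_of_subset hsub]; omega
    obtain ⟨i, hi⟩ := Finset.card_eq_one.mp this
    have hiu : i ∈ u \ v := hi ▸ Finset.mem_singleton_self i
    refine ⟨i, (Finset.mem_sdiff.mp hiu).1, ?_⟩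
    show u.erase i = v
    rw [show u.erase i = u \ {i} from Finset.erase_eq u i, ← hi,
      Finset.sdiff_sdiff_eq_self hsub]

lemma pair_swap (n : ℕ) (P : Finset (Fin n) → Finset (Fin n) → ℝ) :
    ∑ v : Finset (Fin n), ∑ u ∈ Finset.univ.filter (fun u => v ⊆ u ∧ u.card = v.card + 1), P v u
    = ∑ u : Finset (Fin n), ∑ v ∈ Finset.univ.filter (fun v => v ⊆ u ∧ u.card = v.card + 1), P v u := by
  simp_rw [Finset.sum_filter]
  exact Finset.sum_comm

lemma Rpoly_eval_one (m : ℕ) : (Rpoly m).eval 1 = rr m := by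
  rw [Rpoly, rr, Polynomial.eval_finset_sum]
  apply Finset.sum_congr rfl
  intro k _
  simp [ff]

lemma Rpoly_eval_two (m : ℕ) : (Rpoly m).eval 2 = ee m := by
  rw [Rpoly, ee, Polynomial.eval_finset_sum]
  apply Finset.sum_congr rfl
  intro k _
  simp only [Polynomial.eval_mul, Polynomial.eval_C, Polynomial.eval_pow, Polynomial.eval_X]
  rw [show (-2:ℝ)^k = (-1)^k * 2^k from by rw [neg_pow]]
  ring

lemma card_le {n : ℕ} (u : Finset (Fin n)) : u.card ≤ n := by
  simpa using Finset.card_le_univ u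

theorem stmt_7 (n : ℕ) (hn : 1 ≤ n) :
    IsLeast {s : ℝ | ∃ x : Finset (Fin n) → ℝ, LPFeasible n x ∧ s = ∑ u : Finset (Fin n), x u}
      ((-1 : ℝ) ^ n * n.factorial *
        ((Rpoly n).eval 2 - (Rpoly n).eval 1 * (Rpoly (n - 1)).eval 1)) := by
  have hT : ((-1 : ℝ) ^ n * n.factorial *
      ((Rpoly n).eval 2 - (Rpoly n).eval 1 * (Rpoly (n - 1)).eval 1))
      = (-1) ^ n * (n.factorial : ℝ) * (ee n - rr n * rr (n - 1)) := by
    rw [Rpoly_eval_two, Rpoly_eval_one, Rpoly_eval_one]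
  rw [hT]
  constructor
  · refine ⟨fun u => aa n u.card, ⟨fun u => ⟨aa_nonneg (card_le u), aa_le_one (card_le u)⟩, ?_⟩, ?_⟩
    · intro v
      have hsum : ∑ u ∈ Finset.univ.filter (fun u => v ⊆ u ∧ u.card = v.card + 1),
          aa n u.card = ((n - v.card : ℕ) : ℝ) * aa n (v.card + 1) := by
        rw [Finset.sum_congr rfl (fun u hu => by rw [(Finset.mem_filter.mp hu).2.2]),
          Finset.sum_const, card_sup, nsmul_eq_mul]
      rw [hsum]
      show (1:ℝ) ≤ aa n v.card + ((n - v.card : ℕ) : ℝ) * aa n (v.card + 1)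
      have hv : v.card ≤ n := card_le v
      by_cases h2 : v.card + 2 ≤ n
      · rw [Nat.cast_sub hv]
        exact le_of_eq (aa_rec h2).symm
      · rcases eq_or_ne v.card n with h3 | h3
        · have ha : aa n v.card = 1 := by rw [aa, if_pos h3]
          rw [ha, show n - v.card = 0 from by omega]
          norm_num
        · have h4 : v.card + 1 = n := by omega
          have ha : aa n (v.card + 1) = 1 := by rw [aa, if_pos h4]
          rw [ha, show n - v.card = 1 from by omega]
          have h5 := aa_nonneg (show v.card ≤ n by omega) (n := n)
          push_cast
          linarith
    · rw [sum_card n (aa n), Psum n hn]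
  · rintro s ⟨x, ⟨hb, hc⟩, rfl⟩
    have step1 : ∑ v : Finset (Fin n), bb n v.card
        = (-1 : ℝ) ^ n * (n.factorial : ℝ) * (ee n - rr n * rr (n - 1)) := by
      rw [sum_card n (bb n), Dsum]
    rw [← step1]
    calc ∑ v : Finset (Fin n), bb n v.card
        ≤ ∑ v : Finset (Fin n), bb n v.card *
            (x v + ∑ u ∈ Finset.univ.filter (fun u => v ⊆ u ∧ u.card = v.card + 1), x u) := by
          apply Finset.sum_le_sum
          intro v _
          exact le_mul_of_one_le_right (bb_nonneg hn (card_le v)) (hc v)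
      _ = ∑ v : Finset (Fin n), bb n v.card * x v
          + ∑ v : Finset (Fin n),
              ∑ u ∈ Finset.univ.filter (fun u => v ⊆ u ∧ u.card = v.card + 1),
                bb n v.card * x u := by
          rw [← Finset.sum_add_distrib]
          apply Finset.sum_congr rfl
          intro v _
          rw [mul_add, Finset.mul_sum]
      _ = ∑ u : Finset (Fin n), bb n u.card * x u
          + ∑ u : Finset (Fin n),
              ∑ v ∈ Finset.univ.filter (fun v => v ⊆ u ∧ u.card = v.card + 1),
                bb n v.card * x u := by
          rw [pair_swap n (fun v u => bb n v.card * x u)]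
      _ = ∑ u : Finset (Fin n), (bb n u.card + (u.card : ℝ) * bb n (u.card - 1)) * x u := by
          rw [← Finset.sum_add_distrib]
          apply Finset.sum_congr rfl
          intro u _
          have hin : ∑ v ∈ Finset.univ.filter (fun v => v ⊆ u ∧ u.card = v.card + 1),
              bb n v.card * x u = (u.card : ℝ) * (bb n (u.card - 1) * x u) := by
            rw [Finset.sum_congr rfl (fun v hv => by
              have h5 := (Finset.mem_filter.mp hv).2.2
              rw [show v.card = u.card - 1 from by omega]),
              Finset.sum_const, card_sub, nsmul_eq_mul]
          rw [hin]
          ring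
      _ ≤ ∑ u : Finset (Fin n), x u := by
          apply Finset.sum_le_sum
          intro u _
          have hcle : bb n u.card + (u.card : ℝ) * bb n (u.card - 1) ≤ 1 := by
            rcases Nat.eq_zero_or_pos u.card with h0 | h0
            · rw [h0]
              simpa using bb_zero_le_one n
            · obtain ⟨j, hj⟩ : ∃ j, u.card = j + 1 := ⟨u.card - 1, by omega⟩
              rw [hj, show j + 1 - 1 = j from rfl]
              push_cast
              exact le_of_eq (bb_rec n j)
          calc (bb n u.card + (u.card : ℝ) * bb n (u.card - 1)) * x u
              ≤ 1 * x u := mul_le_mul_of_nonneg_right hcle (hb u).1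
            _ = x u := one_mul _
end

section
/- D(4,1) = 6: the minimum size of an asymmetric covering 𝒟(4,1) of 𝔽₂⁴ is 6. -/
/-- `C` is an asymmetric covering `𝒟(n,1)`: every `v` is in `C` or is contained in
some `u ∈ C` with `wt(u) = wt(v) + 1` (subsets of `Fin n` model binary vectors). -/
def IsAsymCov (n : ℕ) (C : Finset (Finset (Fin n))) : Prop :=
  ∀ v : Finset (Fin n), v ∈ C ∨ ∃ u ∈ C, v ⊆ u ∧ u.card = v.card + 1

lemma key (C : Finset (Finset (Fin 4))) (hC : IsAsymCov 4 C) (k : ℕ) :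
    Nat.choose 4 k ≤ (C.filter (fun u => u.card = k)).card * Nat.choose k k
      + (C.filter (fun u => u.card = k + 1)).card * Nat.choose (k+1) k := by
  have hsub : (Finset.univ.powersetCard k : Finset (Finset (Fin 4))) ⊆
      (C.filter (fun u => u.card = k ∨ u.card = k + 1)).biUnion
        (fun u => u.powersetCard k) := by
    intro v hv
    rw [Finset.mem_powersetCard] at hv
    rcases hC v with h | ⟨u, hu, hvu, hcard⟩
    · exact Finset.mem_biUnion.2 ⟨v, Finset.mem_filter.2 ⟨h, Or.inl hv.2⟩,
        Finset.mem_powersetCard.2 ⟨Finset.Subset.refl v, hv.2⟩⟩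
    · exact Finset.mem_biUnion.2 ⟨u, Finset.mem_filter.2 ⟨hu, Or.inr (by omega)⟩,
        Finset.mem_powersetCard.2 ⟨hvu, hv.2⟩⟩
  have h1 : Nat.choose 4 k ≤ ∑ u ∈ C.filter (fun u => u.card = k ∨ u.card = k + 1),
      (u.card.choose k) := by
    calc Nat.choose 4 k = (Finset.univ.powersetCard k : Finset (Finset (Fin 4))).card := by
          rw [Finset.card_powersetCard]; simp
      _ ≤ _ := Finset.card_le_card hsub
      _ ≤ ∑ u ∈ C.filter (fun u => u.card = k ∨ u.card = k + 1),
            (u.powersetCard k).card := Finset.card_biUnion_le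
      _ = _ := Finset.sum_congr rfl (fun u _ => Finset.card_powersetCard _ _)
  rw [Finset.filter_or, Finset.sum_union] at h1
  · have e1 : ∑ u ∈ C.filter (fun u => u.card = k), u.card.choose k
        = (C.filter (fun u => u.card = k)).card * Nat.choose k k := by
      rw [Finset.sum_congr rfl (fun u hu => by rw [(Finset.mem_filter.1 hu).2]),
        Finset.sum_const, smul_eq_mul]
    have e2 : ∑ u ∈ C.filter (fun u => u.card = k + 1), u.card.choose k
        = (C.filter (fun u => u.card = k + 1)).card * Nat.choose (k+1) k := by
      rw [Finset.sum_congr rfl (fun u hu => by rw [(Finset.mem_filter.1 hu).2]),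
        Finset.sum_const, smul_eq_mul]
    omega
  · rw [Finset.disjoint_left]
    intro u h1 h2
    have := (Finset.mem_filter.1 h1).2
    have := (Finset.mem_filter.1 h2).2
    omega

theorem stmt_11 :
    IsLeast {m : ℕ | ∃ C : Finset (Finset (Fin 4)), IsAsymCov 4 C ∧ C.card = m} 6 := by
  constructor
  · refine ⟨{∅, {0,1}, {0,2}, {0,3}, {1,2,3}, {0,1,2,3}}, ?_, by decide⟩
    unfold IsAsymCov; decide
  · rintro m ⟨C, hC, rfl⟩
    have h4 : (Finset.univ : Finset (Fin 4)) ∈ C := by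
      rcases hC Finset.univ with h | ⟨u, hu, hvu, hcard⟩
      · exact h
      · exfalso
        have h1 : u.card ≤ 4 := by
          have := Finset.card_le_univ u; simpa using this
        have h2 : (Finset.univ : Finset (Fin 4)).card = 4 := by simp
        omega
    have hsum : C.card = ∑ k ∈ Finset.range 5, (C.filter (fun u => u.card = k)).card := by
      apply Finset.card_eq_sum_card_fiberwise
      intro x _
      simp only [Finset.mem_coe, Finset.mem_range]
      have := Finset.card_le_univ x
      simp at this; omega
    have hn4 : 1 ≤ (C.filter (fun u => u.card = 4)).card := by
      rw [Finset.one_le_card]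
      exact ⟨Finset.univ, Finset.mem_filter.2 ⟨h4, by simp⟩⟩
    have k0 := key C hC 0
    have k1 := key C hC 1
    have k2 := key C hC 2
    simp only [Nat.choose] at k0 k1 k2
    rw [Finset.sum_range_succ, Finset.sum_range_succ, Finset.sum_range_succ,
      Finset.sum_range_succ, Finset.sum_range_succ, Finset.sum_range_zero] at hsum
    norm_num [Nat.choose, -Finset.card_eq_zero] at k0 k1 k2
    omega
end

section
/- If 𝒞 ⊆ 𝔽₂^{n+1} is a union ⋃_{i=0}^{⌊n/2⌋} 𝒞(n+1, n+1−2i, n−2i) of covering designs (i.e., for each i, the weight-(n+1−2i) vectors of 𝒞 cover all weight-(n−2i) vectors of 𝔽₂^{n+1} from above), then deleting the last coordinate from all vectors of 𝒞 yields a banded asymmetric covering 𝒟(n,1) of 𝔽₂ⁿ. -/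
/-- `C` is banded: every `v` of odd co-weight is covered from one level above. -/
def IsBanded (n : ℕ) (C : Finset (Finset (Fin n))) : Prop :=
  ∀ v : Finset (Fin n), Odd (n - v.card) → ∃ u ∈ C, v ⊆ u ∧ u.card = v.card + 1

/-!
Write `w` for the weight of `v ⊆ [n]`. If `n - w` is odd, `v ∪ {n+1}` has weight `w + 1` of even
co-weight, so it lies below some `s ∈ 𝒞` of weight `w + 2`; since `s` contains the last coordinate,
deleting it leaves a set of weight `w + 1` above `v`. If `n - w` is even, `v` itself lies below some
`s ∈ 𝒞` of weight `w + 1`, and deleting the last coordinate gives either `v` or a set of weight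
`w + 1` above `v`, according as `s` contains the last coordinate or not.
-/

open Finset

namespace AsymCov

/-- `C` is a union `⋃_{i ≤ n/2} 𝒞(n+1, n+1-2i, n-2i)` of covering designs. -/
def IsCoveringDesignUnion (n : ℕ) (C : Finset (Finset (Fin (n + 1)))) : Prop :=
  ∀ i ≤ n / 2, ∀ t : Finset (Fin (n + 1)), t.card = n - 2 * i →
    ∃ s ∈ C, s.card = n + 1 - 2 * i ∧ t ⊆ s

def dropLast {n : ℕ} (s : Finset (Fin (n + 1))) : Finset (Fin n) :=
  univ.filter fun j => j.castSucc ∈ s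

variable {n : ℕ}

@[simp]
theorem mem_dropLast {s : Finset (Fin (n + 1))} {j : Fin n} :
    j ∈ dropLast s ↔ j.castSucc ∈ s := by
  simp [dropLast]

theorem subset_dropLast_iff {s : Finset (Fin (n + 1))} {v : Finset (Fin n)} :
    v ⊆ dropLast s ↔ v.map Fin.castSuccEmb ⊆ s := by
  simp [subset_iff]

theorem map_dropLast (s : Finset (Fin (n + 1))) :
    (dropLast s).map Fin.castSuccEmb = s.erase (Fin.last n) := by
  ext j
  induction j using Fin.lastCases with
  | last => simp [Fin.castSucc_ne_last]
  | cast j => simp [Fin.castSucc_ne_last]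

theorem card_dropLast (s : Finset (Fin (n + 1))) :
    (dropLast s).card = (s.erase (Fin.last n)).card := by
  rw [← map_dropLast, card_map]

theorem card_dropLast_of_last_mem {s : Finset (Fin (n + 1))} (h : Fin.last n ∈ s) :
    (dropLast s).card + 1 = s.card := by
  rw [card_dropLast, card_erase_add_one h]

theorem card_dropLast_of_last_notMem {s : Finset (Fin (n + 1))} (h : Fin.last n ∉ s) :
    (dropLast s).card = s.card := by
  rw [card_dropLast, erase_eq_of_notMem h]

theorem IsCoveringDesignUnion.exists_superset {C : Finset (Finset (Fin (n + 1)))}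
    (hC : IsCoveringDesignUnion n C) {t : Finset (Fin (n + 1))} (ht : t.card ≤ n)
    (heven : Even (n - t.card)) : ∃ s ∈ C, s.card = t.card + 1 ∧ t ⊆ s := by
  obtain ⟨i, hi⟩ := heven
  obtain ⟨s, hsC, hs, hts⟩ := hC i (by omega) t (by omega)
  exact ⟨s, hsC, by omega, hts⟩

theorem IsCoveringDesignUnion.isBanded_image_dropLast {C : Finset (Finset (Fin (n + 1)))}
    (hC : IsCoveringDesignUnion n C) : IsBanded n (C.image dropLast) := by
  intro v hodd
  have hlast : Fin.last n ∉ v.map Fin.castSuccEmb := by simp [Fin.castSucc_ne_last]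
  set t := cons (Fin.last n) (v.map Fin.castSuccEmb) hlast
  have hv : v.card ≤ n := by simpa using card_le_univ v
  have ht : t.card = v.card + 1 := by simp [t]
  obtain ⟨i, hi⟩ := hodd
  obtain ⟨s, hsC, hs, hts⟩ := hC.exists_superset (t := t) (by omega) ⟨i, by omega⟩
  have hlast_mem : Fin.last n ∈ s := hts (mem_cons_self _ _)
  refine ⟨dropLast s, mem_image_of_mem _ hsC, ?_, ?_⟩
  · exact subset_dropLast_iff.2 ((subset_cons _).trans hts)
  · have := card_dropLast_of_last_mem hlast_mem
    omega

theorem IsCoveringDesignUnion.isAsymCov_image_dropLast {C : Finset (Finset (Fin (n + 1)))}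
    (hC : IsCoveringDesignUnion n C) : IsAsymCov n (C.image dropLast) := by
  intro v
  rcases Nat.even_or_odd (n - v.card) with heven | hodd
  · have hv : v.card ≤ n := by simpa using card_le_univ v
    obtain ⟨s, hsC, hs, hvs⟩ := hC.exists_superset (t := v.map Fin.castSuccEmb) (by rwa [card_map])
      (by rwa [card_map])
    rw [card_map] at hs
    have hvu := subset_dropLast_iff.2 hvs
    by_cases hlast : Fin.last n ∈ s
    · left
      have := card_dropLast_of_last_mem hlast
      rw [eq_of_subset_of_card_le hvu (by omega)]
      exact mem_image_of_mem _ hsC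
    · right
      exact ⟨dropLast s, mem_image_of_mem _ hsC, hvu, by
        rw [card_dropLast_of_last_notMem hlast, hs]⟩
  · exact .inr (hC.isBanded_image_dropLast v hodd)

end AsymCov

open AsymCov in
theorem stmt_12 (n : ℕ) (C : Finset (Finset (Fin (n + 1))))
    (hcov : ∀ i ≤ n / 2, ∀ t : Finset (Fin (n + 1)), t.card = n - 2 * i →
      ∃ s ∈ C, s.card = n + 1 - 2 * i ∧ t ⊆ s)
    (D : Finset (Finset (Fin n)))
    (hD : D = C.image (fun s => Finset.univ.filter (fun j : Fin n => j.castSucc ∈ s))) :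
    IsAsymCov n D ∧ IsBanded n D := by
  have hC : IsCoveringDesignUnion n C := hcov
  subst hD
  exact ⟨hC.isAsymCov_image_dropLast, hC.isBanded_image_dropLast⟩
end

section
/- The minimum size C(n) of a banded asymmetric covering 𝒟(n,1) satisfies C(n) = ∑_{i=0}^{⌊n/2⌋} C(n+1, n+1−2i, n−2i), where C(v,k,t) is the minimum size of a covering design 𝒞(v,k,t). -/
/-- `C(n)`: the minimum size of a banded asymmetric covering `𝒟(n,1)`. -/
noncomputable def bandedCoveringNumber (n : ℕ) : ℕ :=
  sInf {m : ℕ | ∃ C : Finset (Finset (Fin n)), IsAsymCov n C ∧ IsBanded n C ∧ C.card = m}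

/-- `C(v,k,t)`: the minimum size of a covering design `𝒞(v,k,t)`. -/
noncomputable def coveringNumber (v k t : ℕ) : ℕ :=
  sInf {m : ℕ | ∃ C : Finset (Finset (Fin v)), (∀ s ∈ C, s.card = k) ∧
    (∀ T : Finset (Fin v), T.card = t → ∃ s ∈ C, T ⊆ s) ∧ C.card = m}

namespace Stmt14Aux

variable {n : ℕ}

/-- Push a subset of `Fin n` to a subset of `Fin (n+1)` via `castSucc`. -/
def push (v : Finset (Fin n)) : Finset (Fin (n + 1)) :=
  v.map ⟨Fin.castSucc, Fin.castSucc_injective n⟩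

/-- Pull back a subset of `Fin (n+1)` along `castSucc` (drops `Fin.last n`). -/
def pull (s : Finset (Fin (n + 1))) : Finset (Fin n) :=
  Finset.univ.filter fun j => j.castSucc ∈ s

lemma mem_pull {s : Finset (Fin (n + 1))} {j : Fin n} : j ∈ pull s ↔ j.castSucc ∈ s := by
  simp [pull]

lemma castSucc_mem_push {v : Finset (Fin n)} {j : Fin n} : j.castSucc ∈ push v ↔ j ∈ v :=
  Finset.mem_map' _

lemma card_push (v : Finset (Fin n)) : (push v).card = v.card := Finset.card_map _

lemma last_not_mem_push (v : Finset (Fin n)) : Fin.last n ∉ push v := by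
  simp only [push, Finset.mem_map, Function.Embedding.coeFn_mk]
  rintro ⟨j, _, hj⟩
  exact absurd hj (Fin.castSucc_lt_last j).ne

lemma push_pull (s : Finset (Fin (n + 1))) : push (pull s) = s.erase (Fin.last n) := by
  ext x
  simp only [push, Finset.mem_map, Function.Embedding.coeFn_mk, mem_pull, Finset.mem_erase]
  constructor
  · rintro ⟨j, hj, rfl⟩
    exact ⟨(Fin.castSucc_lt_last j).ne, hj⟩
  · rintro ⟨hne, hx⟩
    obtain ⟨j, rfl⟩ := Fin.exists_castSucc_eq.mpr hne
    exact ⟨j, hx, rfl⟩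

lemma card_pull (s : Finset (Fin (n + 1))) :
    (pull s).card = (s.erase (Fin.last n)).card := by
  rw [← push_pull s]
  exact (card_push _).symm

lemma push_mono {v w : Finset (Fin n)} (h : v ⊆ w) : push v ⊆ push w :=
  Finset.map_subset_map.mpr h

lemma push_inj {v w : Finset (Fin n)} (h : push v = push w) : v = w :=
  Finset.map_injective _ h

/-- Map a member of a banded asymmetric covering to a block of a covering design on `Fin (n+1)`. -/
noncomputable def toBlock (u : Finset (Fin n)) : Finset (Fin (n + 1)) :=
  if Even (n - u.card) then insert (Fin.last n) (push u) else push u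

lemma toBlock_inj : Function.Injective (toBlock (n := n)) := by
  intro u v h
  unfold toBlock at h
  split_ifs at h with h1 h2 h2
  · have h' := congrArg (fun t => Finset.erase t (Fin.last n)) h
    simp only [Finset.erase_insert (last_not_mem_push u),
      Finset.erase_insert (last_not_mem_push v)] at h'
    exact push_inj h'
  · exfalso
    have : Fin.last n ∈ push v := h ▸ Finset.mem_insert_self _ _
    exact last_not_mem_push v this
  · exfalso
    have : Fin.last n ∈ push u := h ▸ Finset.mem_insert_self _ _
    exact last_not_mem_push u this
  · exact push_inj h

lemma card_le_n (u : Finset (Fin n)) : u.card ≤ n :=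
  le_trans (Finset.card_le_univ u) (by simp)

/-- Lower bound: any banded asymmetric covering has size at least the sum of covering numbers. -/
lemma lower (C : Finset (Finset (Fin n))) (hA : IsAsymCov n C) (hB : IsBanded n C) :
    ∑ i ∈ Finset.range (n / 2 + 1), coveringNumber (n + 1) (n + 1 - 2 * i) (n - 2 * i)
      ≤ C.card := by
  classical
  have h1 : ∀ i ∈ Finset.range (n / 2 + 1),
      coveringNumber (n + 1) (n + 1 - 2 * i) (n - 2 * i)
        ≤ (C.filter fun u => u.card = n - 2 * i ∨ u.card = n - 2 * i + 1).card := by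
    intro i hi
    have h2i : 2 * i ≤ n := by
      have := Finset.mem_range.mp hi; omega
    refine Nat.sInf_le ⟨(C.filter fun u => u.card = n - 2 * i ∨ u.card = n - 2 * i + 1).image
      toBlock, ?_, ?_, ?_⟩
    · rintro s hs
      simp only [Finset.mem_image, Finset.mem_filter] at hs
      obtain ⟨u, ⟨huC, hc⟩, rfl⟩ := hs
      have hun : u.card ≤ n := card_le_n u
      rcases hc with hc | hc
      · have hev : Even (n - u.card) := ⟨i, by omega⟩
        rw [toBlock, if_pos hev, Finset.card_insert_of_notMem (last_not_mem_push u), card_push]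
        omega
      · have hodd : ¬ Even (n - u.card) := by
          simp only [Nat.even_iff]; omega
        rw [toBlock, if_neg hodd, card_push]
        omega
    · intro T hT
      by_cases hl : Fin.last n ∈ T
      · have hTne : 1 ≤ T.card := Finset.card_pos.mpr ⟨_, hl⟩
        have hvcard : (pull T).card = n - 2 * i - 1 := by
          rw [card_pull, Finset.card_erase_of_mem hl, hT]
        have hvodd : Odd (n - (pull T).card) := ⟨i, by omega⟩
        obtain ⟨u, huC, hvu, hucard⟩ := hB (pull T) hvodd
        have hun : u.card ≤ n := card_le_n u
        have hucard' : u.card = n - 2 * i := by omega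
        have hev : Even (n - u.card) := ⟨i, by omega⟩
        refine ⟨toBlock u, Finset.mem_image_of_mem _
          (Finset.mem_filter.mpr ⟨huC, Or.inl hucard'⟩), ?_⟩
        rw [toBlock, if_pos hev]
        intro x hx
        rcases eq_or_ne x (Fin.last n) with rfl | hxne
        · exact Finset.mem_insert_self _ _
        · apply Finset.mem_insert_of_mem
          have hx' : x ∈ push (pull T) := by
            rw [push_pull]
            exact Finset.mem_erase.mpr ⟨hxne, hx⟩
          exact push_mono hvu hx'
      · have hpv : push (pull T) = T := by
          rw [push_pull, Finset.erase_eq_of_notMem hl]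
        have hvcard : (pull T).card = n - 2 * i := by
          have := card_push (pull T)
          rw [hpv] at this
          omega
        rcases hA (pull T) with hvC | ⟨u, huC, hvu, hucard⟩
        · have hev : Even (n - (pull T).card) := ⟨i, by omega⟩
          refine ⟨toBlock (pull T), Finset.mem_image_of_mem _
            (Finset.mem_filter.mpr ⟨hvC, Or.inl hvcard⟩), ?_⟩
          rw [toBlock, if_pos hev]
          intro x hx
          exact Finset.mem_insert_of_mem (by rw [hpv]; exact hx)
        · have hun : u.card ≤ n := card_le_n u
          have hucard' : u.card = n - 2 * i + 1 := by omega
          have hodd : ¬ Even (n - u.card) := by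
            simp only [Nat.even_iff]; omega
          refine ⟨toBlock u, Finset.mem_image_of_mem _
            (Finset.mem_filter.mpr ⟨huC, Or.inr hucard'⟩), ?_⟩
          rw [toBlock, if_neg hodd]
          intro x hx
          exact push_mono hvu (by rw [hpv]; exact hx)
    · exact Finset.card_image_of_injective _ toBlock_inj
  calc ∑ i ∈ Finset.range (n / 2 + 1), coveringNumber (n + 1) (n + 1 - 2 * i) (n - 2 * i)
      ≤ ∑ i ∈ Finset.range (n / 2 + 1),
          (C.filter fun u => u.card = n - 2 * i ∨ u.card = n - 2 * i + 1).card :=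
        Finset.sum_le_sum h1
    _ = ((Finset.range (n / 2 + 1)).biUnion fun i =>
          C.filter fun u => u.card = n - 2 * i ∨ u.card = n - 2 * i + 1).card := by
        refine (Finset.card_biUnion ?_).symm
        intro i hi j hj hij
        rw [Function.onFun, Finset.disjoint_left]
        rintro u hui huj
        have hi' := Finset.mem_range.mp hi
        have hj' := Finset.mem_range.mp hj
        have h1 := (Finset.mem_filter.mp hui).2
        have h2 := (Finset.mem_filter.mp huj).2
        have hun : u.card ≤ n := card_le_n u
        omega
    _ ≤ C.card := Finset.card_le_card
        (Finset.biUnion_subset.mpr fun i _ => Finset.filter_subset _ _)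

/-- Upper bound: glue minimum covering designs into a banded asymmetric covering. -/
lemma upper :
    ∃ C : Finset (Finset (Fin n)), IsAsymCov n C ∧ IsBanded n C ∧
      C.card = ∑ i ∈ Finset.range (n / 2 + 1),
        coveringNumber (n + 1) (n + 1 - 2 * i) (n - 2 * i) := by
  classical
  have hex : ∀ i : ℕ, ∃ D : Finset (Finset (Fin (n + 1))),
      (∀ s ∈ D, s.card = n + 1 - 2 * i) ∧
      (∀ T : Finset (Fin (n + 1)), T.card = n - 2 * i → ∃ s ∈ D, T ⊆ s) ∧
      D.card = coveringNumber (n + 1) (n + 1 - 2 * i) (n - 2 * i) := by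
    intro i
    have hne : {m : ℕ | ∃ C : Finset (Finset (Fin (n + 1))),
        (∀ s ∈ C, s.card = n + 1 - 2 * i) ∧
        (∀ T : Finset (Fin (n + 1)), T.card = n - 2 * i → ∃ s ∈ C, T ⊆ s) ∧
        C.card = m}.Nonempty := by
      refine ⟨_, Finset.powersetCard (n + 1 - 2 * i) Finset.univ, ?_, ?_, rfl⟩
      · intro s hs; exact Finset.mem_powersetCard_univ.mp hs
      · intro T hT
        obtain ⟨s, hTs, hscard⟩ := Finset.exists_superset_card_eq
          (s := T) (n := n + 1 - 2 * i) (by omega) (by simp)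
        exact ⟨s, Finset.mem_powersetCard_univ.mpr hscard, hTs⟩
    have hmem := Nat.sInf_mem hne
    obtain ⟨D, hD1, hD2, hD3⟩ := hmem
    exact ⟨D, hD1, hD2, hD3⟩
  choose D hD1 hD2 hDcard using hex
  refine ⟨(Finset.range (n / 2 + 1)).biUnion fun i => (D i).image pull, ?_, ?_, ?_⟩
  rotate_left
  · -- banded
    intro v hodd
    obtain ⟨i, hi⟩ := hodd
    have hvn : v.card ≤ n := card_le_n v
    have hT : (insert (Fin.last n) (push v)).card = n - 2 * i := by
      rw [Finset.card_insert_of_notMem (last_not_mem_push v), card_push]; omega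
    obtain ⟨s, hsD, hTs⟩ := hD2 i _ hT
    have hscard : s.card = n + 1 - 2 * i := hD1 i s hsD
    have hls : Fin.last n ∈ s := hTs (Finset.mem_insert_self _ _)
    refine ⟨pull s, ?_, ?_, ?_⟩
    · exact Finset.mem_biUnion.mpr ⟨i, Finset.mem_range.mpr (by omega),
        Finset.mem_image_of_mem _ hsD⟩
    · intro j hj
      exact mem_pull.mpr (hTs (Finset.mem_insert_of_mem (castSucc_mem_push.mpr hj)))
    · rw [card_pull, Finset.card_erase_of_mem hls]; omega
  · -- cardinality
    rw [Finset.card_biUnion]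
    · refine Finset.sum_congr rfl fun i hi => ?_
      rw [← hDcard i]
      apply Finset.card_image_of_injOn
      intro s hs t ht hst
      simp only [Finset.mem_coe] at hs ht
      have h1 := hD1 i s hs
      have h2 := hD1 i t ht
      have h2i : 2 * i ≤ n := by
        have := Finset.mem_range.mp hi; omega
      have he : s.erase (Fin.last n) = t.erase (Fin.last n) := by
        rw [← push_pull, ← push_pull, hst]
      by_cases hls : Fin.last n ∈ s <;> by_cases hlt : Fin.last n ∈ t
      · rw [← Finset.insert_erase hls, ← Finset.insert_erase hlt, he]
      · exfalso
        have hc := Finset.card_erase_of_mem hls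
        rw [he, Finset.erase_eq_of_notMem hlt] at hc
        omega
      · exfalso
        have hc := Finset.card_erase_of_mem hlt
        rw [← he, Finset.erase_eq_of_notMem hls] at hc
        omega
      · rw [← Finset.erase_eq_of_notMem hls, ← Finset.erase_eq_of_notMem hlt, he]
    · intro i hi j hj hij
      rw [Function.onFun, Finset.disjoint_left]
      rintro w hwi hwj
      obtain ⟨s, hs, rfl⟩ := Finset.mem_image.mp hwi
      obtain ⟨t, ht, hts⟩ := Finset.mem_image.mp hwj
      have h1 := hD1 i s hs
      have h2 := hD1 j t ht
      have hi' := Finset.mem_range.mp hi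
      have hj' := Finset.mem_range.mp hj
      have hcs : (pull s).card = s.card ∨ (pull s).card = s.card - 1 := by
        by_cases h : Fin.last n ∈ s
        · right; rw [card_pull, Finset.card_erase_of_mem h]
        · left; rw [card_pull, Finset.erase_eq_of_notMem h]
      have hct : (pull t).card = t.card ∨ (pull t).card = t.card - 1 := by
        by_cases h : Fin.last n ∈ t
        · right; rw [card_pull, Finset.card_erase_of_mem h]
        · left; rw [card_pull, Finset.erase_eq_of_notMem h]
      rw [hts] at hct
      omega
  · -- asymmetric covering
    intro v
    by_cases hodd : Odd (n - v.card)
    · -- use bandedness; reprove inline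
      right
      obtain ⟨i, hi⟩ := hodd
      have hvn : v.card ≤ n := card_le_n v
      have hT : (insert (Fin.last n) (push v)).card = n - 2 * i := by
        rw [Finset.card_insert_of_notMem (last_not_mem_push v), card_push]; omega
      obtain ⟨s, hsD, hTs⟩ := hD2 i _ hT
      have hscard : s.card = n + 1 - 2 * i := hD1 i s hsD
      have hls : Fin.last n ∈ s := hTs (Finset.mem_insert_self _ _)
      refine ⟨pull s, ?_, ?_, ?_⟩
      · exact Finset.mem_biUnion.mpr ⟨i, Finset.mem_range.mpr (by omega),
          Finset.mem_image_of_mem _ hsD⟩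
      · intro j hj
        exact mem_pull.mpr (hTs (Finset.mem_insert_of_mem (castSucc_mem_push.mpr hj)))
      · rw [card_pull, Finset.card_erase_of_mem hls]; omega
    · have hvn : v.card ≤ n := card_le_n v
      rw [Nat.odd_iff] at hodd
      obtain ⟨i, hi⟩ : ∃ i, n - v.card = 2 * i := ⟨(n - v.card) / 2, by omega⟩
      have hT : (push v).card = n - 2 * i := by rw [card_push]; omega
      obtain ⟨s, hsD, hTs⟩ := hD2 i _ hT
      have hscard : s.card = n + 1 - 2 * i := hD1 i s hsD
      have hiC : pull s ∈ (Finset.range (n / 2 + 1)).biUnion fun i => (D i).image pull :=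
        Finset.mem_biUnion.mpr ⟨i, Finset.mem_range.mpr (by omega),
          Finset.mem_image_of_mem _ hsD⟩
      have hvsub : v ⊆ pull s := fun j hj => mem_pull.mpr (hTs (castSucc_mem_push.mpr hj))
      by_cases hls : Fin.last n ∈ s
      · left
        have hcard : (pull s).card = v.card := by
          rw [card_pull, Finset.card_erase_of_mem hls]; omega
        have hv : v = pull s := Finset.eq_of_subset_of_card_le hvsub (by omega)
        rw [hv]; exact hiC
      · right
        refine ⟨pull s, hiC, hvsub, ?_⟩
        rw [card_pull, Finset.erase_eq_of_notMem hls]; omega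

end Stmt14Aux

theorem stmt_14 (n : ℕ) (hn : 1 ≤ n) :
    bandedCoveringNumber n =
      ∑ i ∈ Finset.range (n / 2 + 1), coveringNumber (n + 1) (n + 1 - 2 * i) (n - 2 * i) := by
  obtain ⟨C, hA, hB, hc⟩ := Stmt14Aux.upper (n := n)
  apply le_antisymm
  · exact Nat.sInf_le ⟨C, hA, hB, hc⟩
  · have hne : {m : ℕ | ∃ C : Finset (Finset (Fin n)),
        IsAsymCov n C ∧ IsBanded n C ∧ C.card = m}.Nonempty := ⟨_, C, hA, hB, rfl⟩
    obtain ⟨C₀, hA₀, hB₀, hc₀⟩ := Nat.sInf_mem hne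
    calc ∑ i ∈ Finset.range (n / 2 + 1), coveringNumber (n + 1) (n + 1 - 2 * i) (n - 2 * i)
        ≤ C₀.card := Stmt14Aux.lower C₀ hA₀ hB₀
      _ = bandedCoveringNumber n := hc₀
end
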